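/- Suppose β ~ N(0, τ²) with τ > 0 and, conditionally on β, b ~ N(β, se²) with se > 0. Then for every real c, E(β ∣ b > c) = τ²·φ(c/√(se² + τ²)) / (√(se² + τ²)·(1 − Φ(c/√(se² + τ²)))), where φ and Φ are the standard normal density and cumulative distribution function. -/

import Mathlib

open MeasureTheory ProbabilityTheory

/-- The standard normal density φ. -/
noncomputable def phiPDF (x : ℝ) : ℝ := (Real.sqrt (2 * Real.pi))⁻¹ * Real.exp (-x ^ 2 / 2)

/-- The standard normal cumulative distribution function Φ. -/
noncomputable def Phi (x : ℝ) : ℝ := ∫ t in Set.Iic x, phiPDF t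

/-! Write `v = τ² + se²`. The variable `se²·β − τ²·ε` is centred and uncorrelated with
`b = β + ε`; as `(β, ε)` is jointly Gaussian, it is independent of `b`, so it integrates to zero
over `{c < b}`. Hence `v·E[β; c < b] = τ²·E[b; c < b]`, and since `b ~ N(0, v)` both this truncated
first moment and `P(c < b)` reduce, after scaling by `√v`, to the standard normal, where
`∫_c^∞ x φ(x) dx = φ(c)` because `(−φ)' = x φ`. -/

open Real Set Filter Topology
open scoped NNReal

lemma phiPDF_eq_gaussianPDFReal : phiPDF = gaussianPDFReal 0 1 := by
  ext x
  simp [phiPDF, gaussianPDFReal]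

lemma setIntegral_gaussianReal_eq_setIntegral_mul {μ : ℝ} {v : ℝ≥0} (hv : v ≠ 0) {s : Set ℝ}
    (hs : MeasurableSet s) (f : ℝ → ℝ) :
    ∫ x in s, f x ∂gaussianReal μ v = ∫ x in s, gaussianPDFReal μ v x * f x := by
  rw [← integral_indicator hs, integral_gaussianReal_eq_integral_smul hv, ← integral_indicator hs]
  congr 1 with x
  by_cases hx : x ∈ s <;> simp [hx]

lemma hasDerivAt_phiPDF (x : ℝ) : HasDerivAt phiPDF (-x * phiPDF x) x := by
  have h : HasDerivAt (fun y : ℝ => -y ^ 2 / 2) (-x) x :=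
    ((hasDerivAt_pow 2 x).fun_neg.div_const 2).congr_deriv (by ring)
  exact (h.exp.const_mul (√(2 * π))⁻¹).congr_deriv (by unfold phiPDF; ring)

lemma tendsto_phiPDF_atTop : Tendsto phiPDF atTop (𝓝 0) := by
  have h : Tendsto (fun y : ℝ => -y ^ 2 / 2) atTop atBot := by
    simp_rw [neg_div]
    exact tendsto_neg_atTop_atBot.comp ((tendsto_pow_atTop two_ne_zero).atTop_div_const two_pos)
  have := (tendsto_exp_atBot.comp h).const_mul (√(2 * π))⁻¹
  rwa [mul_zero] at this

lemma integrable_phiPDF_mul_id : Integrable fun x => phiPDF x * x := by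
  refine ((integrable_mul_exp_neg_mul_sq (b := 1 / 2) one_half_pos).const_mul (√(2 * π))⁻¹).congr
    (ae_of_all _ fun x => ?_)
  dsimp only [phiPDF]
  rw [show -(1 / 2) * x ^ 2 = -x ^ 2 / 2 by ring]
  ring

lemma setIntegral_Ioi_id_gaussianReal_zero_one (c : ℝ) :
    ∫ x in Ioi c, x ∂gaussianReal 0 1 = phiPDF c := by
  rw [setIntegral_gaussianReal_eq_setIntegral_mul one_ne_zero measurableSet_Ioi,
    ← phiPDF_eq_gaussianPDFReal,
    integral_Ioi_of_hasDerivAt_of_tendsto' (f := fun x => -phiPDF x)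
      (fun x _ => by simpa [mul_comm] using (hasDerivAt_phiPDF x).fun_neg)
      integrable_phiPDF_mul_id.integrableOn (by simpa using tendsto_phiPDF_atTop.neg)]
  ring

lemma Phi_eq_measureReal_Iic (x : ℝ) : Phi x = (gaussianReal 0 1).real (Iic x) := by
  rw [measureReal_def, gaussianReal_apply_eq_integral 0 one_ne_zero, ENNReal.toReal_ofReal
      (setIntegral_nonneg measurableSet_Iic fun _ _ ↦ gaussianPDFReal_nonneg _ _ _),
    Phi, phiPDF_eq_gaussianPDFReal]

lemma gaussianReal_zero_eq_map_sqrt_mul (v : ℝ≥0) :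
    gaussianReal 0 v = (gaussianReal 0 1).map (fun x => √(v : ℝ) * x) := by
  rw [gaussianReal_map_const_mul]
  congr 1
  · simp
  · ext; simp

lemma measureReal_Ioi_gaussianReal {v : ℝ≥0} (hv : v ≠ 0) (c : ℝ) :
    (gaussianReal 0 v).real (Ioi c) = 1 - Phi (c / √(v : ℝ)) := by
  have hv' : 0 < √(v : ℝ) := by positivity
  rw [gaussianReal_zero_eq_map_sqrt_mul, map_measureReal_apply (by fun_prop) measurableSet_Ioi,
    preimage_const_mul_Ioi₀ c hv', ← compl_Iic, probReal_compl_eq_one_sub measurableSet_Iic,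
    Phi_eq_measureReal_Iic]

lemma setIntegral_Ioi_id_gaussianReal {v : ℝ≥0} (hv : v ≠ 0) (c : ℝ) :
    ∫ x in Ioi c, x ∂gaussianReal 0 v = √(v : ℝ) * phiPDF (c / √(v : ℝ)) := by
  have hv' : 0 < √(v : ℝ) := by positivity
  rw [gaussianReal_zero_eq_map_sqrt_mul,
    setIntegral_map (f := fun x => x) (g := fun x => √(v : ℝ) * x) measurableSet_Ioi
      (by fun_prop) (by fun_prop), preimage_const_mul_Ioi₀ c hv', integral_const_mul,
    setIntegral_Ioi_id_gaussianReal_zero_one]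

namespace ProbabilityTheory

variable {Ω : Type*} {mΩ : MeasurableSpace Ω} {P : Measure Ω} {X Y : Ω → ℝ}

lemma IndepFun.setIntegral_preimage_eq_mul [IsFiniteMeasure P] (hXY : IndepFun X Y P)
    (hX : AEMeasurable X P) (hY : AEMeasurable Y P) {s : Set ℝ} (hs : MeasurableSet s) :
    ∫ ω in Y ⁻¹' s, X ω ∂P = P.real (Y ⁻¹' s) * ∫ ω, X ω ∂P := by
  have hpre : (fun ω => (X ω, Y ω)) ⁻¹' (univ ×ˢ s) = Y ⁻¹' s := by ext; simp
  rw [← hpre, ← setIntegral_map (f := Prod.fst) (MeasurableSet.univ.prod hs) (by fun_prop)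
      (hX.prodMk hY), (indepFun_iff_map_prod_eq_prod_map_map hX hY).mp hXY,
    ← Measure.prod_restrict, Measure.restrict_univ, integral_fun_fst (fun x : ℝ => x), hpre,
    measureReal_restrict_apply_univ, map_measureReal_apply_of_aemeasurable hY hs,
    integral_map hX (by fun_prop)]
  rfl

lemma covariance_sub_add_eq_zero_of_gaussianReal {μ₁ μ₂ : ℝ} {v₁ v₂ : ℝ≥0}
    (hX : HasLaw X (gaussianReal μ₁ v₁) P) (hY : HasLaw Y (gaussianReal μ₂ v₂) P)
    (hXY : IndepFun X Y P) :
    cov[fun ω => v₂ * X ω - v₁ * Y ω, fun ω => X ω + Y ω; P] = 0 := by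
  have hX2 : MemLp X 2 P := hX.hasGaussianLaw.memLp_two
  have hY2 : MemLp Y 2 P := hY.hasGaussianLaw.memLp_two
  have := hX.isProbabilityMeasure
  change cov[(v₂ : ℝ) • X - (v₁ : ℝ) • Y, X + Y; P] = 0
  rw [covariance_sub_left (hX2.const_smul _) (hY2.const_smul _) (hX2.add hY2),
    covariance_smul_left, covariance_smul_left, covariance_add_right hX2 hX2 hY2,
    covariance_add_right hY2 hX2 hY2, hXY.covariance_eq_zero hX2 hY2,
    hXY.symm.covariance_eq_zero hY2 hX2, covariance_self hX.aemeasurable,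
    covariance_self hY.aemeasurable, hX.variance_eq, hY.variance_eq, variance_id_gaussianReal,
    variance_id_gaussianReal]
  ring

lemma indepFun_sub_add_of_gaussianReal {μ₁ μ₂ : ℝ} {v₁ v₂ : ℝ≥0}
    (hX : HasLaw X (gaussianReal μ₁ v₁) P) (hY : HasLaw Y (gaussianReal μ₂ v₂) P)
    (hXY : IndepFun X Y P) :
    IndepFun (fun ω => v₂ * X ω - v₁ * Y ω) (fun ω => X ω + Y ω) P := by
  let L : ℝ × ℝ →L[ℝ] ℝ × ℝ :=
    ((v₂ : ℝ) • ContinuousLinearMap.fst ℝ ℝ ℝ - (v₁ : ℝ) • ContinuousLinearMap.snd ℝ ℝ ℝ).prod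
      (ContinuousLinearMap.fst ℝ ℝ ℝ + ContinuousLinearMap.snd ℝ ℝ ℝ)
  have hjoint : HasGaussianLaw (fun ω => (v₂ * X ω - v₁ * Y ω, X ω + Y ω)) P :=
    (hXY.hasGaussianLaw hX.hasGaussianLaw hY.hasGaussianLaw).map_fun L
  exact hjoint.indepFun_of_covariance_eq_zero
    (covariance_sub_add_eq_zero_of_gaussianReal hX hY hXY)

lemma setIntegral_preimage_add_of_gaussianReal {v₁ v₂ : ℝ≥0}
    (hX : HasLaw X (gaussianReal 0 v₁) P) (hY : HasLaw Y (gaussianReal 0 v₂) P)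
    (hXY : IndepFun X Y P) {s : Set ℝ} (hs : MeasurableSet s) :
    (v₁ + v₂ : ℝ) * ∫ ω in (fun ω => X ω + Y ω) ⁻¹' s, X ω ∂P
      = v₁ * ∫ ω in (fun ω => X ω + Y ω) ⁻¹' s, (X ω + Y ω) ∂P := by
  have := hX.isProbabilityMeasure
  have hXi := hX.hasGaussianLaw.integrable
  have hYi := hY.hasGaussianLaw.integrable
  have hRi : Integrable (fun ω => v₂ * X ω - v₁ * Y ω) P :=
    (hXi.const_mul _).sub (hYi.const_mul _)
  have hSi : Integrable (fun ω => v₁ * (X ω + Y ω)) P := (hXi.add hYi).const_mul _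
  have hmean : ∫ ω, (v₂ * X ω - v₁ * Y ω) ∂P = 0 := by
    rw [integral_sub (hXi.const_mul _) (hYi.const_mul _), integral_const_mul, integral_const_mul,
      hX.integral_eq, hY.integral_eq, integral_id_gaussianReal, integral_id_gaussianReal]
    ring
  have hres : ∫ ω in (fun ω => X ω + Y ω) ⁻¹' s, (v₂ * X ω - v₁ * Y ω) ∂P = 0 := by
    rw [(indepFun_sub_add_of_gaussianReal hX hY hXY).setIntegral_preimage_eq_mul (by fun_prop)
      (by fun_prop) hs, hmean, mul_zero]
  calc (v₁ + v₂ : ℝ) * ∫ ω in (fun ω => X ω + Y ω) ⁻¹' s, X ω ∂P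
      = ∫ ω in (fun ω => X ω + Y ω) ⁻¹' s, ((v₂ * X ω - v₁ * Y ω) + v₁ * (X ω + Y ω)) ∂P := by
        rw [← integral_const_mul]; congr 1 with ω; ring
    _ = v₁ * ∫ ω in (fun ω => X ω + Y ω) ⁻¹' s, (X ω + Y ω) ∂P := by
        rw [integral_add hRi.restrict hSi.restrict, hres, integral_const_mul, zero_add]

lemma hasLaw_add_of_gaussianReal {v₁ v₂ : ℝ≥0}
    (hX : HasLaw X (gaussianReal 0 v₁) P) (hY : HasLaw Y (gaussianReal 0 v₂) P)
    (hXY : IndepFun X Y P) :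
    HasLaw (fun ω => X ω + Y ω) (gaussianReal 0 (v₁ + v₂)) P :=
  ⟨by fun_prop,
    add_zero (0 : ℝ) ▸ gaussianReal_add_gaussianReal_of_indepFun hXY hX.map_eq hY.map_eq⟩

lemma measureReal_lt_add_of_gaussianReal {v₁ v₂ : ℝ≥0}
    (hX : HasLaw X (gaussianReal 0 v₁) P) (hY : HasLaw Y (gaussianReal 0 v₂) P)
    (hXY : IndepFun X Y P) (hv : v₁ + v₂ ≠ 0) (c : ℝ) :
    P.real {ω | c < X ω + Y ω} = 1 - Phi (c / √((v₁ + v₂ : ℝ≥0) : ℝ)) := by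
  rw [← measureReal_Ioi_gaussianReal hv, ← (hasLaw_add_of_gaussianReal hX hY hXY).map_eq,
    map_measureReal_apply_of_aemeasurable (by fun_prop) measurableSet_Ioi]
  rfl

lemma setIntegral_lt_add_of_gaussianReal {v₁ v₂ : ℝ≥0}
    (hX : HasLaw X (gaussianReal 0 v₁) P) (hY : HasLaw Y (gaussianReal 0 v₂) P)
    (hXY : IndepFun X Y P) (hv : v₁ + v₂ ≠ 0) (c : ℝ) :
    ∫ ω in {ω | c < X ω + Y ω}, X ω ∂P
      = v₁ * phiPDF (c / √((v₁ + v₂ : ℝ≥0) : ℝ)) / √((v₁ + v₂ : ℝ≥0) : ℝ) := by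
  set v : ℝ≥0 := v₁ + v₂ with hv_def
  have hS := hasLaw_add_of_gaussianReal hX hY hXY
  have hmoment : (v : ℝ) * ∫ ω in {ω | c < X ω + Y ω}, X ω ∂P = v₁ * (√v * phiPDF (c / √v)) := by
    rw [← setIntegral_Ioi_id_gaussianReal hv, ← hS.map_eq,
      setIntegral_map measurableSet_Ioi (by fun_prop) hS.aemeasurable, hv_def, NNReal.coe_add]
    exact setIntegral_preimage_add_of_gaussianReal hX hY hXY measurableSet_Ioi
  have hsqrt : 0 < √(v : ℝ) := by positivity
  rw [eq_div_iff hsqrt.ne']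
  refine mul_left_cancel₀ hsqrt.ne' ?_
  linear_combination hmoment + (∫ ω in {ω | c < X ω + Y ω}, X ω ∂P) * sq_sqrt v.coe_nonneg

end ProbabilityTheory

theorem condExp_beta_given_b_gt_general {Ω : Type*} [MeasurableSpace Ω]
    (P : Measure Ω) (β ε b : Ω → ℝ) (τ se : ℝ)
    (hse : 0 < se)
    (hβ : Measure.map β P = gaussianReal 0 (Real.toNNReal (τ ^ 2)))
    (hε : Measure.map ε P = gaussianReal 0 (Real.toNNReal (se ^ 2)))
    (hind : IndepFun β ε P)
    (hb : ∀ ω, b ω = β ω + ε ω) :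
    ∀ c : ℝ,
      (∫ ω in {ω | c < b ω}, β ω ∂P) / (P {ω | c < b ω}).toReal
        = τ ^ 2 * phiPDF (c / Real.sqrt (se ^ 2 + τ ^ 2))
            / (Real.sqrt (se ^ 2 + τ ^ 2)
                * (1 - Phi (c / Real.sqrt (se ^ 2 + τ ^ 2)))) := by
  intro c
  have hβ' : HasLaw β (gaussianReal 0 (τ ^ 2).toNNReal) P :=
    ⟨aemeasurable_of_map_neZero (by rw [hβ]; infer_instance), hβ⟩
  have hε' : HasLaw ε (gaussianReal 0 (se ^ 2).toNNReal) P :=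
    ⟨aemeasurable_of_map_neZero (by rw [hε]; infer_instance), hε⟩
  have hv : (((τ ^ 2).toNNReal + (se ^ 2).toNNReal : ℝ≥0) : ℝ) = se ^ 2 + τ ^ 2 := by
    rw [NNReal.coe_add, coe_toNNReal _ (sq_nonneg _), coe_toNNReal _ (sq_nonneg _), add_comm]
  have hv0 : (τ ^ 2).toNNReal + (se ^ 2).toNNReal ≠ 0 := by
    rw [← NNReal.coe_ne_zero, hv]; positivity
  have hset : {ω | c < b ω} = {ω | c < β ω + ε ω} := by simp only [hb]
  rw [← measureReal_def, hset, setIntegral_lt_add_of_gaussianReal hβ' hε' hind hv0,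
    measureReal_lt_add_of_gaussianReal hβ' hε' hind hv0, hv, coe_toNNReal _ (sq_nonneg _), div_div]

/-- Hierarchical normal model: `β ~ N(0, τ²)` and, given `β`, `b = β + ε ~ N(β, se²)`
with `ε ~ N(0, se²)` independent of `β`.  Then for every real `c`,
`E(β ∣ b > c) = τ²·φ(c/√(se² + τ²)) / (√(se² + τ²)·(1 − Φ(c/√(se² + τ²))))`,
where `E(X ∣ A) = E(X·1_A)/P(A)`. -/
theorem condExp_beta_given_b_gt {Ω : Type*} [MeasurableSpace Ω]
    (P : Measure Ω) [IsProbabilityMeasure P] (β ε b : Ω → ℝ) (τ se : ℝ)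
    (hτ : 0 < τ) (hse : 0 < se)
    (hβ : Measure.map β P = gaussianReal 0 (Real.toNNReal (τ ^ 2)))
    (hε : Measure.map ε P = gaussianReal 0 (Real.toNNReal (se ^ 2)))
    (hind : IndepFun β ε P)
    (hb : ∀ ω, b ω = β ω + ε ω) :
    ∀ c : ℝ,
      (∫ ω in {ω | c < b ω}, β ω ∂P) / (P {ω | c < b ω}).toReal
        = τ ^ 2 * phiPDF (c / Real.sqrt (se ^ 2 + τ ^ 2))
            / (Real.sqrt (se ^ 2 + τ ^ 2)
                * (1 - Phi (c / Real.sqrt (se ^ 2 + τ ^ 2)))) :=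
  condExp_beta_given_b_gt_general P β ε b τ se hse hβ hε hind hb
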